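/- Let X, X₁, X₂, … be i.i.d. real random variables, let μ* = E[X], and define μ̂_n = (n₀·x₀ + ∑_{i=1}^n X_i)/(n + n₀) for fixed constants x₀ ∈ ℝ and n₀ > 0. Let k be a positive even integer with E[|X|^k] < ∞. Then P(|μ̂_n − μ*| ≥ δ) = O(n^{−k/2}·δ^{−k}); that is, there exists a constant C such that for all n ≥ 1 and all δ > 0, P(|μ̂_n − μ*| ≥ δ) ≤ C·n^{−k/2}·δ^{−k}. -/

import Mathlib

/-!
Centre the observations, `Y i = X i - μ*`, and let `S n = ∑_{i<n} Y i`. Expanding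
`(S n + Y n) ^ j` binomially and using independence,
`E[S (n+1) ^ j] - E[S n ^ j] = ∑_{i ≤ j-2} C(j,i) E[S n ^ i] E[Y ^ (j-i)]`,
the term `i = j - 1` vanishing because `E[Y] = 0`. Summing these increments, induction on `j`
gives `|E[S n ^ j]| ≤ D n ^ ⌊j/2⌋`. Finally `μ̂_n - μ* = (n₀ (x₀ - μ*) + S n) / (n + n₀)`, and
Markov's inequality for the `k`-th power of `|n₀ (x₀ - μ*) + S n|` gives the bound; `k` is even,
so `E[|S n| ^ k] = E[S n ^ k]`.
-/

open MeasureTheory ProbabilityTheory Finset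

/-- The modified maximum likelihood estimator
`μ̂_n = (n₀·x₀ + ∑_{i=1}^n X_i) / (n + n₀)`, built from a fake initial outcome `x₀`
counted with multiplicity `n₀`. -/
noncomputable def modML {Ω : Type*} (x₀ n₀ : ℝ) (X : ℕ → Ω → ℝ) (n : ℕ) (ω : Ω) : ℝ :=
  (n₀ * x₀ + ∑ i ∈ Finset.range n, X i ω) / (n + n₀)

section Moments

variable {Ω : Type*} [MeasurableSpace Ω] {μ : Measure Ω}

lemma MeasureTheory.MemLp.integrable_pow_of_le [IsFiniteMeasure μ] {f : Ω → ℝ} {k j : ℕ}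
    (hf : MemLp f k μ) (hj : j ≤ k) : Integrable (fun ω => f ω ^ j) μ := by
  have hfj : MemLp f j μ := hf.mono_exponent (by exact_mod_cast hj)
  refine (integrable_norm_iff (hf.aestronglyMeasurable.pow j)).mp ?_
  simpa only [Pi.pow_apply, norm_pow] using hfj.integrable_norm_pow'

lemma MeasureTheory.MemLp.integrable_abs_pow [IsFiniteMeasure μ] {f : Ω → ℝ} {k : ℕ}
    (hf : MemLp f k μ) : Integrable (fun ω => |f ω| ^ k) μ := by
  simpa only [Real.norm_eq_abs] using hf.integrable_norm_pow'

lemma memLp_of_integrable_abs_pow {f : Ω → ℝ} {k : ℕ} (hf : AEStronglyMeasurable f μ)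
    (hk : k ≠ 0) (hint : Integrable (fun ω => |f ω| ^ k) μ) : MemLp f k μ := by
  refine (integrable_norm_rpow_iff hf (by exact_mod_cast hk) (by simp)).mp ?_
  simpa [Real.norm_eq_abs] using hint

lemma measureReal_le_integral_abs_pow_div [IsFiniteMeasure μ] {f : Ω → ℝ} {k : ℕ}
    (hf : MemLp f k μ) {ε : ℝ} (hε : 0 < ε) :
    μ.real {ω | ε ≤ |f ω|} ≤ (∫ ω, |f ω| ^ k ∂μ) / ε ^ k := by
  have hsub : {ω | ε ≤ |f ω|} ⊆ {ω | ε ^ k ≤ |f ω| ^ k} := fun ω hω =>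
    pow_le_pow_left₀ hε.le hω k
  rw [le_div_iff₀ (by positivity), mul_comm]
  calc ε ^ k * μ.real {ω | ε ≤ |f ω|}
      ≤ ε ^ k * μ.real {ω | ε ^ k ≤ |f ω| ^ k} :=
        mul_le_mul_of_nonneg_left (measureReal_mono hsub (measure_ne_top μ _)) (by positivity)
    _ ≤ ∫ ω, |f ω| ^ k ∂μ :=
        mul_meas_ge_le_integral_of_nonneg (.of_forall fun ω => by positivity)
          hf.integrable_abs_pow _

lemma integral_abs_const_add_pow_le [IsProbabilityMeasure μ] {f : Ω → ℝ} {k : ℕ}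
    (hf : MemLp f k μ) (c : ℝ) :
    ∫ ω, |c + f ω| ^ k ∂μ ≤ 2 ^ (k - 1) * (|c| ^ k + ∫ ω, |f ω| ^ k ∂μ) := by
  have hfk := hf.integrable_abs_pow
  have hcfk : Integrable (fun ω => |c + f ω| ^ k) μ := ((memLp_const c).add hf).integrable_abs_pow
  calc ∫ ω, |c + f ω| ^ k ∂μ ≤ ∫ ω, 2 ^ (k - 1) * (|c| ^ k + |f ω| ^ k) ∂μ := by
        refine integral_mono hcfk (((integrable_const _).add hfk).const_mul _) fun ω => ?_
        calc |c + f ω| ^ k ≤ (|c| + |f ω|) ^ k := by gcongr; exact abs_add_le _ _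
          _ ≤ _ := add_pow_le (abs_nonneg _) (abs_nonneg _) k
    _ = 2 ^ (k - 1) * (|c| ^ k + ∫ ω, |f ω| ^ k ∂μ) := by
        rw [integral_const_mul, integral_add (integrable_const _) hfk]
        simp

lemma measureReal_mul_le_abs_const_add_le [IsProbabilityMeasure μ] {f : Ω → ℝ} {k : ℕ}
    (hk : Even k) (hf : MemLp f k μ) (c : ℝ) {D : ℝ} {n : ℕ} (hn : 1 ≤ n)
    (hfk : ∫ ω, |f ω| ^ k ∂μ ≤ D * (n : ℝ) ^ (k / 2))
    {δ : ℝ} (hδ : 0 < δ) :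
    μ.real {ω | δ * n ≤ |c + f ω|} ≤ 2 ^ (k - 1) * (|c| ^ k + D) / ((n : ℝ) ^ (k / 2) * δ ^ k) := by
  obtain ⟨r, rfl⟩ := hk
  have hr : (r + r) / 2 = r := by omega
  have hnr : 1 ≤ (n : ℝ) ^ r := one_le_pow₀ (by exact_mod_cast hn)
  rw [hr] at hfk ⊢
  calc μ.real {ω | δ * n ≤ |c + f ω|}
      ≤ (∫ ω, |c + f ω| ^ (r + r) ∂μ) / (δ * n) ^ (r + r) :=
        measureReal_le_integral_abs_pow_div ((memLp_const c).add hf) (by positivity)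
    _ ≤ 2 ^ (r + r - 1) * (|c| ^ (r + r) + D * (n : ℝ) ^ r) / (δ * n) ^ (r + r) := by
        gcongr
        exact (integral_abs_const_add_pow_le hf c).trans (by gcongr)
    _ ≤ 2 ^ (r + r - 1) * ((|c| ^ (r + r) + D) * (n : ℝ) ^ r)
          / ((n : ℝ) ^ r * δ ^ (r + r) * n ^ r) := by
        rw [show (δ * n) ^ (r + r) = (n : ℝ) ^ r * δ ^ (r + r) * n ^ r by ring]
        gcongr 2 ^ (r + r - 1) * ?_ / _
        nlinarith [pow_nonneg (abs_nonneg c) (r + r)]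
    _ = 2 ^ (r + r - 1) * (|c| ^ (r + r) + D) / ((n : ℝ) ^ r * δ ^ (r + r)) := by
        rw [← mul_assoc]
        exact mul_div_mul_right _ _ (by positivity)

end Moments

lemma abs_le_mul_pow_of_abs_sub_le {a : ℕ → ℝ} {c : ℝ} {p : ℕ} (hc : 0 ≤ c) (h0 : a 0 = 0)
    (hstep : ∀ t, |a (t + 1) - a t| ≤ c * ((t : ℝ) + 1) ^ p) (n : ℕ) :
    |a n| ≤ c * (n : ℝ) ^ (p + 1) := by
  induction n with
  | zero => simp [h0]
  | succ n ih =>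
    have hn : (n : ℝ) ^ (p + 1) ≤ ((n : ℝ) + 1) ^ p * n := by
      rw [pow_succ]; gcongr; linarith
    calc |a (n + 1)| ≤ |a n| + |a (n + 1) - a n| := by
          simpa using abs_add_le (a n) (a (n + 1) - a n)
      _ ≤ c * (n : ℝ) ^ (p + 1) + c * ((n : ℝ) + 1) ^ p := add_le_add ih (hstep n)
      _ ≤ c * (((n : ℝ) + 1) ^ p * n) + c * ((n : ℝ) + 1) ^ p := by gcongr
      _ = c * ((n + 1 : ℕ) : ℝ) ^ (p + 1) := by push_cast; ring

section PartialSums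

variable {Ω : Type*} [MeasurableSpace Ω] {μ : Measure Ω} [IsProbabilityMeasure μ]
  {Y : ℕ → Ω → ℝ} {k : ℕ}

lemma integral_sum_range_succ_pow (hmeas : ∀ i, Measurable (Y i)) (hindep : iIndepFun Y μ)
    (hident : ∀ i, IdentDistrib (Y i) (Y 0) μ μ) (hmom : MemLp (Y 0) k μ)
    {j : ℕ} (hj : j ≤ k) (n : ℕ) :
    ∫ ω, (∑ i ∈ range (n + 1), Y i ω) ^ j ∂μ =
      ∑ i ∈ range (j + 1), (j.choose i : ℝ) * (∫ ω, (∑ l ∈ range n, Y l ω) ^ i ∂μ) *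
        ∫ ω, Y 0 ω ^ (j - i) ∂μ := by
  have hYk : ∀ i, MemLp (Y i) k μ := fun i => (hident i).memLp_iff.mpr hmom
  have hSk : MemLp (fun ω => ∑ l ∈ range n, Y l ω) k μ := memLp_finsetSum _ fun i _ => hYk i
  have hind : IndepFun (fun ω => ∑ l ∈ range n, Y l ω) (Y n) μ := by
    simpa only [Finset.sum_fn] using hindep.indepFun_sum_range_succ hmeas n
  have hpow : ∀ i, IndepFun (fun ω => (∑ l ∈ range n, Y l ω) ^ i) (fun ω => Y n ω ^ (j - i)) μ :=
    fun i => hind.comp (continuous_pow i).measurable (continuous_pow _).measurable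
  calc ∫ ω, (∑ i ∈ range (n + 1), Y i ω) ^ j ∂μ
      = ∫ ω, ∑ i ∈ range (j + 1),
          (∑ l ∈ range n, Y l ω) ^ i * Y n ω ^ (j - i) * (j.choose i : ℝ) ∂μ := by
        simp_rw [sum_range_succ _ n, add_pow]
    _ = ∑ i ∈ range (j + 1),
          ∫ ω, (∑ l ∈ range n, Y l ω) ^ i * Y n ω ^ (j - i) * (j.choose i : ℝ) ∂μ := by
        refine integral_finsetSum _ fun i hi => ?_
        have hi : i ≤ j := Nat.lt_succ_iff.mp (mem_range.mp hi)
        exact ((hpow i).integrable_mul (hSk.integrable_pow_of_le (hi.trans hj))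
          ((hYk n).integrable_pow_of_le ((j.sub_le i).trans hj))).mul_const _
    _ = _ := by
        refine sum_congr rfl fun i _ => ?_
        have hmoment : ∫ ω, Y n ω ^ (j - i) ∂μ = ∫ ω, Y 0 ω ^ (j - i) ∂μ :=
          ((hident n).comp (continuous_pow (j - i)).measurable).integral_eq
        rw [integral_mul_const, (hpow i).integral_fun_mul_eq_mul_integral
          (hSk.1.pow i) ((hYk n).1.pow _), hmoment]
        ring

lemma integral_sum_range_succ_pow_sub (hmeas : ∀ i, Measurable (Y i)) (hindep : iIndepFun Y μ)
    (hident : ∀ i, IdentDistrib (Y i) (Y 0) μ μ) (hmom : MemLp (Y 0) k μ)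
    (hmean : ∫ ω, Y 0 ω ∂μ = 0) {j : ℕ} (hj₁ : 1 ≤ j) (hj : j ≤ k) (n : ℕ) :
    ∫ ω, (∑ i ∈ range (n + 1), Y i ω) ^ j ∂μ - ∫ ω, (∑ i ∈ range n, Y i ω) ^ j ∂μ =
      ∑ i ∈ range (j - 1), (j.choose i : ℝ) * (∫ ω, (∑ l ∈ range n, Y l ω) ^ i ∂μ) *
        ∫ ω, Y 0 ω ^ (j - i) ∂μ := by
  obtain ⟨m, rfl⟩ : ∃ m, j = m + 1 := ⟨j - 1, by omega⟩
  rw [integral_sum_range_succ_pow hmeas hindep hident hmom hj, sum_range_succ, sum_range_succ]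
  simp [hmean]

lemma exists_abs_integral_sum_pow_le_of_forall_lt (hmeas : ∀ i, Measurable (Y i))
    (hindep : iIndepFun Y μ) (hident : ∀ i, IdentDistrib (Y i) (Y 0) μ μ)
    (hmom : MemLp (Y 0) k μ) (hmean : ∫ ω, Y 0 ω ∂μ = 0) {j : ℕ} (hj₁ : 1 ≤ j) (hj : j ≤ k)
    {D : ℝ} (hD : ∀ i < j, ∀ n : ℕ, |∫ ω, (∑ l ∈ range n, Y l ω) ^ i ∂μ| ≤ D * (n : ℝ) ^ (i / 2)) :
    ∃ c : ℝ, ∀ n : ℕ, |∫ ω, (∑ l ∈ range n, Y l ω) ^ j ∂μ| ≤ c * (n : ℝ) ^ (j / 2) := by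
  set a : ℕ → ℝ := fun n => ∫ ω, (∑ l ∈ range n, Y l ω) ^ j ∂μ
  have h0 : a 0 = 0 := by simp [a, zero_pow (by omega : j ≠ 0)]
  have hincr := integral_sum_range_succ_pow_sub hmeas hindep hident hmom hmean hj₁ hj
  rcases hj₁.eq_or_lt with rfl | hj₂
  · refine ⟨0, fun n => (abs_le_mul_pow_of_abs_sub_le (p := 0) le_rfl h0 (fun t => ?_) n).trans
      (by simp)⟩
    simpa [a] using hincr t
  obtain ⟨p, hp⟩ : ∃ p, j / 2 = p + 1 := ⟨j / 2 - 1, by omega⟩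
  have hD₀ : 0 ≤ D := zero_le_one.trans (by simpa using hD 0 (by omega) 0)
  refine ⟨∑ i ∈ range (j - 1), (j.choose i : ℝ) * D * |∫ ω, Y 0 ω ^ (j - i) ∂μ|, fun n => ?_⟩
  refine hp ▸ abs_le_mul_pow_of_abs_sub_le (by positivity) h0 (fun t => ?_) n
  rw [hincr, sum_mul]
  refine (abs_sum_le_sum_abs _ _).trans (sum_le_sum fun i hi => ?_)
  have hip : i / 2 ≤ p := by have := mem_range.mp hi; omega
  have hmoment : |∫ ω, (∑ l ∈ range t, Y l ω) ^ i ∂μ| ≤ D * ((t : ℝ) + 1) ^ p :=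
    calc _ ≤ D * (t : ℝ) ^ (i / 2) := hD i (by omega) t
      _ ≤ D * ((t : ℝ) + 1) ^ (i / 2) := by gcongr; linarith
      _ ≤ D * ((t : ℝ) + 1) ^ p := by gcongr; linarith
  rw [abs_mul, abs_mul, Nat.abs_cast]
  calc _ ≤ (j.choose i : ℝ) * (D * ((t : ℝ) + 1) ^ p) * |∫ ω, Y 0 ω ^ (j - i) ∂μ| := by
        gcongr
    _ = _ := by ring

theorem exists_abs_integral_sum_pow_le (hmeas : ∀ i, Measurable (Y i)) (hindep : iIndepFun Y μ)
    (hident : ∀ i, IdentDistrib (Y i) (Y 0) μ μ) (hmom : MemLp (Y 0) k μ)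
    (hmean : ∫ ω, Y 0 ω ∂μ = 0) :
    ∃ D : ℝ, ∀ j ≤ k, ∀ n : ℕ, |∫ ω, (∑ l ∈ range n, Y l ω) ^ j ∂μ| ≤ D * (n : ℝ) ^ (j / 2) := by
  suffices ∀ m ≤ k, ∃ D : ℝ, ∀ j ≤ m, ∀ n : ℕ,
      |∫ ω, (∑ l ∈ range n, Y l ω) ^ j ∂μ| ≤ D * (n : ℝ) ^ (j / 2) from this k le_rfl
  intro m hm
  induction m with
  | zero => exact ⟨1, fun j hj n => by rw [Nat.le_zero.mp hj]; simp⟩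
  | succ m ih =>
    obtain ⟨D, hD⟩ := ih (by omega)
    obtain ⟨c, hc⟩ := exists_abs_integral_sum_pow_le_of_forall_lt hmeas hindep hident hmom hmean
      (j := m + 1) (by omega) hm fun i hi => hD i (by omega)
    refine ⟨max D c, fun j hj n => ?_⟩
    rcases hj.lt_or_eq with hj | rfl
    · exact (hD j (by omega) n).trans (by gcongr; exact le_max_left _ _)
    · exact (hc n).trans (by gcongr; exact le_max_right _ _)

theorem exists_integral_abs_sum_pow_le (hmeas : ∀ i, Measurable (Y i)) (hindep : iIndepFun Y μ)
    (hident : ∀ i, IdentDistrib (Y i) (Y 0) μ μ) (hmom : MemLp (Y 0) k μ)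
    (hmean : ∫ ω, Y 0 ω ∂μ = 0) (hk : Even k) :
    ∃ D : ℝ, ∀ n : ℕ, ∫ ω, |∑ l ∈ range n, Y l ω| ^ k ∂μ ≤ D * (n : ℝ) ^ (k / 2) := by
  obtain ⟨D, hD⟩ := exists_abs_integral_sum_pow_le hmeas hindep hident hmom hmean
  refine ⟨D, fun n => ?_⟩
  calc ∫ ω, |∑ l ∈ range n, Y l ω| ^ k ∂μ = ∫ ω, (∑ l ∈ range n, Y l ω) ^ k ∂μ := by
        simp_rw [hk.pow_abs]
    _ = |∫ ω, (∑ l ∈ range n, Y l ω) ^ k ∂μ| :=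
        (abs_of_nonneg (integral_nonneg fun ω => hk.pow_nonneg _)).symm
    _ ≤ D * (n : ℝ) ^ (k / 2) := hD k le_rfl n

end PartialSums

lemma abs_modML_sub_mul_le {Ω : Type*} (X : ℕ → Ω → ℝ) {n₀ : ℝ} (hn₀ : 0 < n₀) (x₀ m : ℝ)
    (n : ℕ) (ω : Ω) :
    |modML x₀ n₀ X n ω - m| * n ≤ |n₀ * (x₀ - m) + ∑ i ∈ range n, (X i ω - m)| := by
  have hpos : (0 : ℝ) < n + n₀ := by positivity
  have hdev : modML x₀ n₀ X n ω - m = (n₀ * (x₀ - m) + ∑ i ∈ range n, (X i ω - m)) / (n + n₀) := by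
    rw [modML, sum_sub_distrib, sum_const, card_range, nsmul_eq_mul]
    field_simp
    ring
  rw [hdev, abs_div, abs_of_pos hpos, div_mul_eq_mul_div, div_le_iff₀ hpos]
  gcongr
  linarith

/-- Theorem `boundprob`: for i.i.d. `X, X₁, X₂, …` whose first `k`
moments exist (`k` a positive even integer), with mean `μ* = E[X]`, we have the
deviation-probability bound `P(|μ̂_n − μ*| ≥ δ) = O(n^{−k/2} · δ^{−k})`. -/
theorem modML_dev_prob
    {Ω : Type*} [MeasurableSpace Ω] (μ : Measure Ω) [IsProbabilityMeasure μ]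
    (X : ℕ → Ω → ℝ)
    (hmeas : ∀ i, Measurable (X i))
    (hindep : iIndepFun X μ)
    (hident : ∀ i, IdentDistrib (X i) (X 0) μ μ)
    (μstar : ℝ) (hμstar : μstar = ∫ ω, X 0 ω ∂μ)
    (x₀ n₀ : ℝ) (hn₀ : 0 < n₀)
    (k : ℕ) (hk : 0 < k) (hkeven : Even k)
    (hmom : Integrable (fun ω => |X 0 ω| ^ k) μ) :
    ∃ C : ℝ, ∀ n : ℕ, 1 ≤ n → ∀ δ : ℝ, 0 < δ →
      (μ {ω | δ ≤ |modML x₀ n₀ X n ω - μstar|}).toReal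
        ≤ C / ((n : ℝ) ^ (k / 2) * δ ^ k) := by
  set Y : ℕ → Ω → ℝ := fun i ω => X i ω - μstar
  have hYident : ∀ i, IdentDistrib (Y i) (Y 0) μ μ :=
    fun i => (hident i).comp (measurable_id.sub_const _)
  have hXk : MemLp (X 0) k μ :=
    memLp_of_integrable_abs_pow (hmeas 0).aestronglyMeasurable hk.ne' hmom
  have hYk : MemLp (Y 0) k μ := hXk.sub (memLp_const μstar)
  have hYmean : ∫ ω, Y 0 ω ∂μ = 0 := by
    simp [Y, integral_sub (hXk.integrable (by exact_mod_cast hk)) (integrable_const _), hμstar]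
  obtain ⟨D, hD⟩ := exists_integral_abs_sum_pow_le (fun i => (hmeas i).sub_const _)
    (hindep.comp _ fun _ => measurable_id.sub_const μstar) hYident hYk hYmean hkeven
  refine ⟨2 ^ (k - 1) * (|n₀ * (x₀ - μstar)| ^ k + D), fun n hn δ hδ => ?_⟩
  have hS : MemLp (fun ω => ∑ i ∈ range n, Y i ω) k μ :=
    memLp_finsetSum _ fun i _ => (hYident i).memLp_iff.mpr hYk
  calc (μ {ω | δ ≤ |modML x₀ n₀ X n ω - μstar|}).toReal
      ≤ μ.real {ω | δ * n ≤ |n₀ * (x₀ - μstar) + ∑ i ∈ range n, Y i ω|} :=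
        measureReal_mono fun ω hω => (mul_le_mul_of_nonneg_right hω (Nat.cast_nonneg n)).trans
          (abs_modML_sub_mul_le X hn₀ x₀ μstar n ω)
    _ ≤ _ := measureReal_mul_le_abs_const_add_le hkeven hS _ hn (hD n) hδ
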